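/- In a graph G with at least one edge, every simplicial vertex (a vertex whose neighborhood induces a clique) belongs to every edge-geodetic set of G, and hence to every monitoring edge-geodetic set of G. -/
import Mathlib


open SimpleGraph

/-- Two vertices `x` and `y` monitor an edge `e` in `G`: there is a shortest path between
them, and `e` lies on every shortest path between `x` and `y`. -/
def Monitors {V : Type*} (G : SimpleGraph V) (x y : V) (e : Sym2 V) : Prop :=
  (∃ p : G.Walk x y, p.IsPath ∧ p.length = G.dist x y) ∧
    ∀ p : G.Walk x y, p.IsPath → p.length = G.dist x y → e ∈ p.edges

/-- `S` is a monitoring edge-geodetic set of `G`. -/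
def IsMEGSet {V : Type*} (G : SimpleGraph V) (S : Set V) : Prop :=
  ∀ e ∈ G.edgeSet, ∃ x ∈ S, ∃ y ∈ S, Monitors G x y e

/-- The minimum size of a monitoring edge-geodetic set of `G`. -/
noncomputable def megNum {V : Type*} (G : SimpleGraph V) : ℕ :=
  sInf {n | ∃ S : Set V, IsMEGSet G S ∧ S.ncard = n}

/-- The set of leaves (degree-1 vertices) of `G`. -/
def leaves {V : Type*} (G : SimpleGraph V) : Set V :=
  {v | (G.neighborSet v).ncard = 1}


/-- An edge-geodetic set: every edge lies on some shortest path between two vertices of `S`. -/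
def IsEdgeGeodeticSet {V : Type*} (G : SimpleGraph V) (S : Set V) : Prop :=
  ∀ e ∈ G.edgeSet, ∃ x ∈ S, ∃ y ∈ S, ∃ p : G.Walk x y,
    p.IsPath ∧ p.length = G.dist x y ∧ e ∈ p.edges

lemma simplicial_not_interior {V : Type*} (G : SimpleGraph V) (v : V)
    (hv : ∀ u ∈ G.neighborSet v, ∀ w ∈ G.neighborSet v, u ≠ w → G.Adj u w)
    {x y : V} (p : G.Walk x y) (hp : p.IsPath) (hlen : p.length = G.dist x y)
    (hmem : v ∈ p.support) (hx : v ≠ x) (hy : v ≠ y) : False := by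
  classical
  set q := p.takeUntil v hmem with hq
  set r := p.dropUntil v hmem with hr
  have hspec : q.append r = p := p.take_spec hmem
  obtain ⟨a, ha, q', hq'⟩ := Walk.exists_eq_cons_of_ne hx q.reverse
  obtain ⟨b, hb, r', hr'⟩ := Walk.exists_eq_cons_of_ne hy r
  have haS : a ∈ q.support := by
    have : a ∈ q.reverse.support := by rw [hq']; simp [Walk.support_cons]
    rwa [Walk.support_reverse, List.mem_reverse] at this
  have hbS : b ∈ r.support.tail := by
    rw [hr']; simp [Walk.support_cons]
  have hnodup : (q.support ++ r.support.tail).Nodup := by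
    have := hp.support_nodup
    rwa [← hspec, Walk.support_append] at this
  have hab : a ≠ b := by
    intro h
    exact (List.disjoint_of_nodup_append hnodup) haS (h ▸ hbS)
  have hadj : G.Adj a b := hv a ha b hb hab
  set W : G.Walk x y := q'.reverse.append (Walk.cons hadj r') with hW
  have hWlen : W.length + 1 = p.length := by
    have h1 : q.length = q'.length + 1 := by
      have : q.reverse.length = q'.length + 1 := by rw [hq']; simp
      simpa using this
    have h2 : r.length = r'.length + 1 := by rw [hr']; simp
    have h3 : p.length = q.length + r.length := by
      rw [← hspec, Walk.length_append]
    simp [hW, Walk.length_append, h1, h2, h3]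
    omega
  have := G.dist_le W
  omega

theorem simplicial_mem_every_edgeGeodetic_and_MEG {V : Type*} [Fintype V]
    (G : SimpleGraph V) (hG : G.Connected) (hE : G.edgeSet.Nonempty) (v : V)
    (hv : ∀ u ∈ G.neighborSet v, ∀ w ∈ G.neighborSet v, u ≠ w → G.Adj u w) :
    (∀ S : Set V, IsEdgeGeodeticSet G S → v ∈ S) ∧
      (∀ S : Set V, IsMEGSet G S → v ∈ S) := by

  classical
  -- v has a neighbor
  obtain ⟨e, he⟩ := hE
  have hnbr : ∃ u, G.Adj v u := by
    induction e using Sym2.ind with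
    | _ a b =>
      have hab : G.Adj a b := he
      by_cases hva : v = a
      · exact ⟨b, hva ▸ hab⟩
      · obtain ⟨w⟩ := hG.preconnected v a
        obtain ⟨z, hz, _, _⟩ := Walk.exists_eq_cons_of_ne hva w
        exact ⟨z, hz⟩
  obtain ⟨u, hu⟩ := hnbr
  have hgeo : ∀ S : Set V, IsEdgeGeodeticSet G S → v ∈ S := by
    intro S hS
    obtain ⟨x, hxS, y, hyS, p, hp, hlen, hep⟩ := hS s(v, u) hu
    have hvp : v ∈ p.support := Walk.fst_mem_support_of_mem_edges p hep
    by_cases hx : v = x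
    · exact hx ▸ hxS
    by_cases hy : v = y
    · exact hy ▸ hyS
    exact absurd (simplicial_not_interior G v hv p hp hlen hvp hx hy) not_false
  refine ⟨hgeo, fun S hS => hgeo S ?_⟩
  intro e he'
  obtain ⟨x, hxS, y, hyS, ⟨⟨p, hp, hlen⟩, hall⟩⟩ := hS e he'
  exact ⟨x, hxS, y, hyS, p, hp, hlen, hall p hp hlen⟩
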